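/- arXiv:1709.04720 — 6 statements merged into one kernel-verified Lean document; each statement's English description precedes it below -/
import Mathlib

section
/- For every even integer k ≥ 2, the limit inferior as n → ∞ of (mi_k(n))^{k/n} is at least 36^{1/9} ≈ 1.489. (In particular, ζ_k^k ≥ 36^{1/9} whenever the limit ζ_k = lim_{n→∞} (mi_k(n))^{1/n} exists.) -/
open SimpleGraph

/-- `D` is a `k`-dominating independent set of `G`: `D` is independent and every vertex
outside `D` has at least `k` neighbours in `D`. -/
def IsKDIS {V : Type*} [Fintype V] (G : SimpleGraph V) (k : ℕ) (D : Finset V) : Prop :=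
  (∀ x ∈ D, ∀ y ∈ D, ¬ G.Adj x y) ∧
  ∀ v : V, v ∉ D → k ≤ (G.neighborSet v ∩ (D : Set V)).ncard

/-- The number of `k`-dominating independent sets of `G`. -/
noncomputable def numKDIS {V : Type*} [Fintype V] (G : SimpleGraph V) (k : ℕ) : ℕ :=
  Nat.card {D : Finset V // IsKDIS G k D}

/-- `mi k n`: the maximum number of `k`-dominating independent sets in a simple graph
on `n` vertices. -/
noncomputable def mi (k n : ℕ) : ℕ :=
  sSup {m : ℕ | ∃ G : SimpleGraph (Fin n), numKDIS G k = m}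

/-- `mDIS k t`: the smallest `n` such that some simple graph on `n` vertices has at least
`t` `k`-dominating independent sets. -/
noncomputable def mDIS (k t : ℕ) : ℕ :=
  sInf {n : ℕ | ∃ G : SimpleGraph (Fin n), t ≤ numKDIS G k}

/-!
Write `k = 2m`. In the rook graph `K₃ □ K₃` the graphs of the six permutations of `Fin 3` are
`2`-dominating independent sets; blowing every vertex up into `m` independent twins turns them
into `2m`-dominating independent sets of a graph on `9m` vertices. Counts multiply under disjoint
union and `mi k` is monotone, so `mi (2m) n ≥ 6 ^ ⌊n / 9m⌋`, and
`6 ^ (2m ⌊n / 9m⌋ / n) → 6 ^ (2/9) = 36 ^ (1/9)`.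
-/

open Filter Topology

section Counting

variable {V W : Type*} [Fintype V] [Fintype W] {k : ℕ}

lemma IsKDIS.map_iso {G : SimpleGraph V} {H : SimpleGraph W} (e : G ≃g H) {D : Finset V}
    (hD : IsKDIS G k D) : IsKDIS H k (D.map e.toEquiv.toEmbedding) := by
  have hmem (v : V) : e v ∈ D.map e.toEquiv.toEmbedding ↔ v ∈ D := Finset.mem_map' _
  refine ⟨fun x hx y hy hxy => ?_, fun w hw => ?_⟩
  · obtain ⟨u, rfl⟩ := e.surjective x
    obtain ⟨v, rfl⟩ := e.surjective y
    exact hD.1 u ((hmem u).1 hx) v ((hmem v).1 hy) (e.map_adj_iff.1 hxy)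
  · obtain ⟨v, rfl⟩ := e.surjective w
    have hset : H.neighborSet (e v) ∩ ↑(D.map e.toEquiv.toEmbedding) =
        e '' (G.neighborSet v ∩ D) := by
      ext w
      obtain ⟨u, rfl⟩ := e.surjective w
      simp [e.injective.eq_iff, e.map_adj_iff]
    rw [hset, Set.ncard_image_of_injective _ e.injective]
    exact hD.2 v (mt (hmem v).2 hw)

lemma numKDIS_le_of_iso {G : SimpleGraph V} {H : SimpleGraph W} (e : G ≃g H) :
    numKDIS G k ≤ numKDIS H k :=
  Nat.card_le_card_of_injective (fun D => ⟨_, D.2.map_iso e⟩) fun _ _ h =>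
    Subtype.ext (Finset.map_injective _ (congrArg Subtype.val h))

lemma SimpleGraph.Iso.numKDIS_eq {G : SimpleGraph V} {H : SimpleGraph W} (e : G ≃g H) :
    numKDIS G k = numKDIS H k :=
  (numKDIS_le_of_iso e).antisymm (numKDIS_le_of_iso e.symm)

lemma IsKDIS.sum {G : SimpleGraph V} {H : SimpleGraph W} {D : Finset V} {E : Finset W}
    (hD : IsKDIS G k D) (hE : IsKDIS H k E) : IsKDIS (G ⊕g H) k (D.disjSum E) := by
  refine ⟨?_, ?_⟩
  · rintro (x | x) hx (y | y) hy hxy <;> simp at hx hy hxy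
    exacts [hD.1 x hx y hy hxy, hE.1 x hx y hy hxy]
  · rintro (v | v) hv
    · have hset : (G ⊕g H).neighborSet (.inl v) ∩ ↑(D.disjSum E) =
          Sum.inl '' (G.neighborSet v ∩ D) := by
        ext (x | x) <;> simp
      rw [hset, Set.ncard_image_of_injective _ Sum.inl_injective]
      exact hD.2 v (by simpa using hv)
    · have hset : (G ⊕g H).neighborSet (.inr v) ∩ ↑(D.disjSum E) =
          Sum.inr '' (H.neighborSet v ∩ E) := by
        ext (x | x) <;> simp
      rw [hset, Set.ncard_image_of_injective _ Sum.inr_injective]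
      exact hE.2 v (by simpa using hv)

lemma numKDIS_mul_numKDIS_le_numKDIS_sum (G : SimpleGraph V) (H : SimpleGraph W) (k : ℕ) :
    numKDIS G k * numKDIS H k ≤ numKDIS (G ⊕g H) k := by
  rw [numKDIS, numKDIS, ← Nat.card_prod]
  exact Nat.card_le_card_of_injective (fun P => ⟨_, P.1.2.sum P.2.2⟩) fun _ _ h => by
    obtain ⟨h₁, h₂⟩ := Finset.disjSum_inj.1 (congrArg Subtype.val h)
    exact Prod.ext (Subtype.ext h₁) (Subtype.ext h₂)

lemma IsKDIS.comap_fst {G : SimpleGraph V} {D : Finset V} (hD : IsKDIS G k D) :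
    IsKDIS (G.comap (Prod.fst : V × W → V)) (k * Nat.card W) (D ×ˢ Finset.univ) := by
  refine ⟨fun x hx y hy hxy => ?_, fun v hv => ?_⟩
  · simp only [Finset.mem_product] at hx hy
    exact hD.1 _ hx.1 _ hy.1 hxy
  · have hset : (G.comap Prod.fst).neighborSet v ∩ ↑(D ×ˢ (Finset.univ : Finset W)) =
        (G.neighborSet v.1 ∩ D) ×ˢ Set.univ := by
      ext x; simp
    rw [hset, Set.ncard_prod, Set.ncard_univ]
    exact Nat.mul_le_mul_right _ (hD.2 v.1 (by simpa using hv))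

lemma numKDIS_le_numKDIS_comap_fst [Nonempty W] (G : SimpleGraph V) (k : ℕ) :
    numKDIS G k ≤ numKDIS (G.comap (Prod.fst : V × W → V)) (k * Nat.card W) := by
  refine Nat.card_le_card_of_injective (fun D => ⟨_, D.2.comap_fst⟩) fun _ _ h => ?_
  obtain ⟨w⟩ := ‹Nonempty W›
  ext v
  simpa using congrArg (fun s => (v, w) ∈ s) (congrArg Subtype.val h)

end Counting

section Rook

variable {α : Type*} [Fintype α] [DecidableEq α]

lemma isKDIS_boxProd_top_filter_perm (σ : Equiv.Perm α) :
    IsKDIS ((⊤ : SimpleGraph α) □ (⊤ : SimpleGraph α)) 2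
      (Finset.univ.filter fun p : α × α => σ p.1 = p.2) := by
  refine ⟨?_, fun ⟨a, b⟩ hab => ?_⟩
  · rintro ⟨a, b⟩ hab ⟨a', b'⟩ hab' hadj
    simp only [Finset.mem_filter, Finset.mem_univ, true_and] at hab hab'
    subst hab hab'
    rcases boxProd_adj.1 hadj with ⟨hne, heq⟩ | ⟨hne, heq⟩
    · exact hne (σ.injective heq)
    · exact hne (congrArg σ heq)
  · simp only [Finset.mem_filter, Finset.mem_univ, true_and] at hab
    have hsub : {(a, σ a), (σ.symm b, b)} ⊆ ((⊤ : SimpleGraph α) □ ⊤).neighborSet (a, b) ∩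
        ↑(Finset.univ.filter fun p : α × α => σ p.1 = p.2) := by
      rintro _ (rfl | rfl)
      · exact ⟨boxProd_adj.2 (.inr ⟨Ne.symm hab, rfl⟩), by simp⟩
      · refine ⟨boxProd_adj.2 (.inl ⟨?_, rfl⟩), by simp⟩
        rintro rfl
        exact hab (σ.apply_symm_apply b)
    calc 2 = ({(a, σ a), (σ.symm b, b)} : Set (α × α)).ncard :=
          (Set.ncard_pair fun h => hab (Prod.ext_iff.1 h).2).symm
      _ ≤ _ := Set.ncard_le_ncard hsub (Set.toFinite _)

lemma factorial_card_le_numKDIS_boxProd_top :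
    (Fintype.card α).factorial ≤ numKDIS ((⊤ : SimpleGraph α) □ (⊤ : SimpleGraph α)) 2 := by
  rw [← Fintype.card_perm, ← Nat.card_eq_fintype_card]
  refine Nat.card_le_card_of_injective (fun σ => ⟨_, isKDIS_boxProd_top_filter_perm σ⟩)
    fun σ τ h => Equiv.ext fun a => ?_
  have := congrArg (fun D => (a, σ a) ∈ D) (congrArg Subtype.val h)
  simpa [eq_comm] using this

end Rook

section Extremal

variable {V : Type*} [Fintype V]

lemma numKDIS_le_two_pow_card (G : SimpleGraph V) (k : ℕ) : numKDIS G k ≤ 2 ^ Fintype.card V :=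
  (Nat.card_le_card_of_injective _ Subtype.val_injective).trans_eq (by simp)

lemma bddAbove_numKDIS_range (k n : ℕ) :
    BddAbove {m : ℕ | ∃ G : SimpleGraph (Fin n), numKDIS G k = m} :=
  ⟨2 ^ n, by rintro _ ⟨G, rfl⟩; simpa using numKDIS_le_two_pow_card G k⟩

lemma numKDIS_le_mi (G : SimpleGraph V) (k : ℕ) : numKDIS G k ≤ mi k (Fintype.card V) :=
  ((SimpleGraph.Iso.map (Fintype.equivFin V) G).numKDIS_eq).trans_le <|
    le_csSup (bddAbove_numKDIS_range _ _) ⟨_, rfl⟩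

lemma exists_numKDIS_eq_mi (k n : ℕ) : ∃ G : SimpleGraph (Fin n), numKDIS G k = mi k n :=
  Nat.sSup_mem (s := {m : ℕ | ∃ G : SimpleGraph (Fin n), numKDIS G k = m}) ⟨_, ⊥, rfl⟩
    (bddAbove_numKDIS_range k n)

lemma mi_le_two_pow (k n : ℕ) : mi k n ≤ 2 ^ n := by
  obtain ⟨G, hG⟩ := exists_numKDIS_eq_mi k n
  simpa [hG] using numKDIS_le_two_pow_card G k

lemma one_le_mi (k n : ℕ) : 1 ≤ mi k n := by
  have hD : IsKDIS (⊥ : SimpleGraph (Fin n)) k Finset.univ :=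
    ⟨fun _ _ _ _ h => h, fun v hv => absurd (Finset.mem_univ v) hv⟩
  have hpos : 0 < numKDIS (⊥ : SimpleGraph (Fin n)) k :=
    Nat.card_pos_iff.2 ⟨⟨⟨_, hD⟩⟩, inferInstance⟩
  simpa using (hpos.trans_le (numKDIS_le_mi _ k)).succ_le

lemma mi_mul_mi_le_mi_add (k a b : ℕ) : mi k a * mi k b ≤ mi k (a + b) := by
  obtain ⟨G, hG⟩ := exists_numKDIS_eq_mi k a
  obtain ⟨H, hH⟩ := exists_numKDIS_eq_mi k b
  rw [← hG, ← hH]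
  simpa using (numKDIS_mul_numKDIS_le_numKDIS_sum G H k).trans (numKDIS_le_mi (G ⊕g H) k)

lemma mi_monotone (k : ℕ) : Monotone (mi k) := fun a b hab => by
  obtain ⟨c, rfl⟩ := Nat.exists_eq_add_of_le hab
  simpa using (Nat.mul_le_mul_left (mi k a) (one_le_mi k c)).trans (mi_mul_mi_le_mi_add k a c)

lemma mi_pow_le_mi_mul (k a q : ℕ) : mi k a ^ q ≤ mi k (a * q) := by
  induction q with
  | zero => simpa using one_le_mi k 0
  | succ q ih =>
    rw [pow_succ, Nat.mul_succ]
    exact (Nat.mul_le_mul_right _ ih).trans (mi_mul_mi_le_mi_add k _ _)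

lemma mi_pow_div_le (k a n : ℕ) : mi k a ^ (n / a) ≤ mi k n :=
  (mi_pow_le_mi_mul k a _).trans (mi_monotone k (Nat.mul_div_le n a))

lemma six_le_mi_two_mul_nine_mul {m : ℕ} (hm : m ≠ 0) : 6 ≤ mi (2 * m) (9 * m) := by
  have : NeZero m := ⟨hm⟩
  have h := (factorial_card_le_numKDIS_boxProd_top (α := Fin 3)).trans
    (numKDIS_le_numKDIS_comap_fst (W := Fin m) _ 2)
  simp only [Fintype.card_fin, Nat.card_eq_fintype_card, Nat.factorial] at h
  simpa [mul_comm 9] using h.trans (numKDIS_le_mi _ _)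

end Extremal

lemma tendsto_natCast_div_div_natCast (d : ℕ) :
    Tendsto (fun n : ℕ => ((n / d : ℕ) : ℝ) / n) atTop (𝓝 (1 / d)) := by
  have h := (tendsto_nat_floor_mul_div_atTop (R := ℝ) (a := 1 / d) (by positivity)).comp
    tendsto_natCast_atTop_atTop
  refine h.congr fun n => ?_
  rw [Function.comp_apply, one_div_mul_eq_div, Nat.floor_div_eq_div]

lemma le_liminf_rpow_of_pow_div_le {f : ℕ → ℕ} {B c d : ℕ} {e : ℝ} (hc : 0 < c) (he : 0 ≤ e)
    (hlow : ∀ n, c ^ (n / d) ≤ f n) (hup : ∀ n, f n ≤ B ^ n) :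
    (c : ℝ) ^ (e / d) ≤ atTop.liminf fun n => (f n : ℝ) ^ (e / n) := by
  have hlim : Tendsto (fun n : ℕ => (c : ℝ) ^ (((n / d : ℕ) : ℝ) / n * e)) atTop
      (𝓝 ((c : ℝ) ^ (e / d))) := by
    have := tendsto_const_nhds.rpow ((tendsto_natCast_div_div_natCast d).mul_const e)
      (Or.inl (Nat.cast_ne_zero.2 hc.ne'))
    rwa [one_div_mul_eq_div] at this
  have hle : ∀ n, (c : ℝ) ^ (((n / d : ℕ) : ℝ) / n * e) ≤ (f n : ℝ) ^ (e / n) := fun n => by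
    calc (c : ℝ) ^ (((n / d : ℕ) : ℝ) / n * e) = ((c : ℝ) ^ (n / d)) ^ (e / n) := by
          rw [← Real.rpow_natCast, ← Real.rpow_mul (Nat.cast_nonneg c), mul_div_assoc',
            div_mul_eq_mul_div]
      _ ≤ (f n : ℝ) ^ (e / n) := Real.rpow_le_rpow (by positivity) (by exact_mod_cast hlow n)
          (by positivity)
  have hbdd : ∀ᶠ n : ℕ in atTop, (f n : ℝ) ^ (e / n) ≤ (B : ℝ) ^ e := by
    filter_upwards [eventually_ne_atTop 0] with n hn
    calc (f n : ℝ) ^ (e / n) ≤ ((B : ℝ) ^ n) ^ (e / n) :=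
          Real.rpow_le_rpow (by positivity) (by exact_mod_cast hup n) (by positivity)
      _ = (B : ℝ) ^ e := by
          rw [← Real.rpow_natCast, ← Real.rpow_mul (Nat.cast_nonneg B), mul_div_cancel₀]
          exact Nat.cast_ne_zero.2 hn
  rw [← hlim.liminf_eq]
  exact liminf_le_liminf (.of_forall hle) hlim.isBoundedUnder_ge
    (isBoundedUnder_of_eventually_le hbdd).isCoboundedUnder_ge

theorem liminf_mi_pow_ge (k : ℕ) (hk : 2 ≤ k) (hke : Even k) :
    (36 : ℝ) ^ ((1 : ℝ) / 9) ≤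
      Filter.atTop.liminf (fun n : ℕ => (mi k n : ℝ) ^ ((k : ℝ) / (n : ℝ))) := by
  obtain ⟨m, rfl⟩ := hke.two_dvd
  have hm : m ≠ 0 := by omega
  have hbase : (36 : ℝ) ^ ((1 : ℝ) / 9) =
      ((6 : ℕ) : ℝ) ^ (((2 * m : ℕ) : ℝ) / ((9 * m : ℕ) : ℝ)) := by
    rw [show (36 : ℝ) = (6 : ℝ) ^ (2 : ℝ) by norm_num, ← Real.rpow_mul (by norm_num)]
    push_cast
    rw [mul_div_mul_right _ _ (Nat.cast_ne_zero.2 hm)]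
    norm_num
  rw [hbase]
  exact le_liminf_rpow_of_pow_div_le (by norm_num) (by positivity)
    (fun n => (Nat.pow_le_pow_left (six_le_mi_two_mul_nine_mul hm) _).trans (mi_pow_div_le _ _ n))
    (mi_le_two_pow _)
end

section
/- For all positive integers k, t and n, one has mi_k(n) ≥ t^{⌊n/m(k,t)⌋}. -/
open SimpleGraph

/-!
Let `H` be a graph on `m = mDIS k t` vertices with at least `t` k-DISes; one exists because each
part of the complete `t`-partite graph with parts of size `k + 1` is a k-DIS. Write
`n = q m + r` and take `q` disjoint copies of `H` together with `r` isolated vertices. A k-DIS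
of a disjoint union is exactly a k-DIS of each component, and the isolated vertices all belong to
it, so this graph on `n` vertices has at least `t ^ q` k-DISes.
-/

namespace SimpleGraph

variable {V W : Type*} {G : SimpleGraph V} {H : SimpleGraph W} {k : ℕ}

theorem ncard_neighborSet_inter_of_embedding (φ : G ↪g H) {v : V}
    (hφ : H.neighborSet (φ v) ⊆ Set.range φ) {D : Set V} {D' : Set W} (hD : φ ⁻¹' D' = D) :
    (H.neighborSet (φ v) ∩ D').ncard = (G.neighborSet v ∩ D).ncard := by
  subst hD
  have himage : H.neighborSet (φ v) ∩ D' = φ '' (G.neighborSet v ∩ φ ⁻¹' D') := by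
    ext w
    constructor
    · rintro ⟨hw, hwD⟩
      obtain ⟨u, rfl⟩ := hφ hw
      exact ⟨u, ⟨φ.map_adj_iff.mp hw, hwD⟩, rfl⟩
    · rintro ⟨u, ⟨hu, huD⟩, rfl⟩
      exact ⟨φ.map_adj_iff.mpr hu, huD⟩
  rw [himage, Set.ncard_image_of_injective _ φ.injective]

variable [Fintype V] [Fintype W]

theorem numKDIS_le_two_pow (G : SimpleGraph V) (k : ℕ) : numKDIS G k ≤ 2 ^ Fintype.card V := by
  classical
  calc numKDIS G k ≤ Nat.card (Finset V) :=
        Nat.card_le_card_of_injective Subtype.val Subtype.val_injective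
    _ = 2 ^ Fintype.card V := by rw [Nat.card_eq_fintype_card, Fintype.card_finset]

theorem IsKDIS.preimage_iso (e : G ≃g H) {D : Finset W} (hD : IsKDIS H k D) :
    IsKDIS G k (D.preimage e e.injective.injOn) := by
  refine ⟨fun x hx y hy hxy => hD.1 _ (Finset.mem_preimage.mp hx) _ (Finset.mem_preimage.mp hy)
    (e.map_adj_iff.mpr hxy), fun v hv => ?_⟩
  have hclosed : H.neighborSet (e.toEmbedding v) ⊆ Set.range e.toEmbedding := fun w _ =>
    ⟨e.symm w, e.apply_symm_apply w⟩
  exact (hD.2 _ (by simpa using hv)).trans_eq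
    (ncard_neighborSet_inter_of_embedding e.toEmbedding hclosed (Finset.coe_preimage _ _).symm)

theorem Iso.numKDIS_le (e : G ≃g H) : numKDIS H k ≤ numKDIS G k := by
  refine Nat.card_le_card_of_injective
    (fun D => ⟨D.1.preimage e e.injective.injOn, D.2.preimage_iso e⟩) fun D₁ D₂ h => ?_
  refine Subtype.ext <| Finset.coe_injective <| Set.preimage_injective.mpr e.surjective ?_
  simpa using congrArg (fun D : {D // IsKDIS G k D} => (D.1 : Set V)) h

theorem Iso.numKDIS_eq_s5 (e : G ≃g H) : numKDIS G k = numKDIS H k :=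
  le_antisymm e.symm.numKDIS_le e.numKDIS_le

theorem exists_fin_numKDIS_eq (G : SimpleGraph V) (k : ℕ) :
    ∃ G' : SimpleGraph (Fin (Fintype.card V)), numKDIS G' k = numKDIS G k :=
  ⟨_, (Iso.map (Fintype.equivFin V) G).numKDIS_eq_s5.symm⟩

theorem numKDIS_le_mi {n : ℕ} (G : SimpleGraph V) (hV : Fintype.card V = n) :
    numKDIS G k ≤ mi k n := by
  subst hV
  obtain ⟨G', hG'⟩ := exists_fin_numKDIS_eq G k
  refine hG' ▸ le_csSup ⟨2 ^ Fintype.card V, ?_⟩ ⟨G', rfl⟩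
  rintro _ ⟨G'', rfl⟩
  simpa using numKDIS_le_two_pow G'' k

theorem isKDIS_completeEquipartiteGraph_part {t s : ℕ} (hks : k ≤ s) (a : Fin t) :
    IsKDIS (completeEquipartiteGraph t s) k ({a} ×ˢ Finset.univ) := by
  set P : Finset (Fin t × Fin s) := {a} ×ˢ Finset.univ
  have hP : ∀ p, p ∈ P ↔ p.1 = a := by simp [P, eq_comm]
  refine ⟨fun x hx y hy hxy => ?_, fun v hv => ?_⟩
  · rw [hP] at hx hy
    exact completeEquipartiteGraph_adj.mp hxy (hx.trans hy.symm)
  · have hall : (completeEquipartiteGraph t s).neighborSet v ∩ P = P := by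
      refine Set.inter_eq_right.mpr fun p hp => ?_
      rw [Finset.mem_coe, hP] at hp
      exact completeEquipartiteGraph_adj.mpr (hp ▸ (hP v).not.mp hv)
    rw [hall, Set.ncard_coe_finset]
    simpa [P] using hks

theorem le_numKDIS_completeEquipartiteGraph {t s : ℕ} (hks : k ≤ s) (hs : 0 < s) :
    t ≤ numKDIS (completeEquipartiteGraph t s) k := by
  have hinj : Function.Injective fun a : Fin t =>
      (⟨_, isKDIS_completeEquipartiteGraph_part hks a⟩ :
        {D // IsKDIS (completeEquipartiteGraph t s) k D}) := by
    intro a b hab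
    have hparts : ({a} ×ˢ Finset.univ : Finset (Fin t × Fin s)) = {b} ×ˢ Finset.univ :=
      congrArg Subtype.val hab
    exact Eq.symm <| by simpa using Finset.ext_iff.mp hparts (a, ⟨0, hs⟩)
  simpa [numKDIS] using Nat.card_le_card_of_injective _ hinj

theorem exists_le_numKDIS_mDIS (k t : ℕ) :
    ∃ H : SimpleGraph (Fin (mDIS k t)), t ≤ numKDIS H k := by
  obtain ⟨G, hG⟩ := exists_fin_numKDIS_eq (completeEquipartiteGraph t (k + 1)) k
  exact Nat.sInf_mem (s := {n | ∃ G : SimpleGraph (Fin n), t ≤ numKDIS G k})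
    ⟨_, G, hG ▸ le_numKDIS_completeEquipartiteGraph k.le_succ k.succ_pos⟩

theorem isKDIS_bot_univ : IsKDIS (⊥ : SimpleGraph V) k Finset.univ :=
  ⟨fun _ _ _ _ h => h, fun v hv => absurd (Finset.mem_univ v) hv⟩

theorem numKDIS_bot_pos : 0 < numKDIS (⊥ : SimpleGraph V) k :=
  have : Nonempty {D // IsKDIS (⊥ : SimpleGraph V) k D} := ⟨⟨_, isKDIS_bot_univ⟩⟩
  Nat.card_pos

theorem IsKDIS.disjSum {D₁ : Finset V} {D₂ : Finset W} (h₁ : IsKDIS G k D₁)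
    (h₂ : IsKDIS H k D₂) : IsKDIS (G ⊕g H) k (D₁.disjSum D₂) := by
  refine ⟨?_, ?_⟩
  · rintro (x | x) hx (y | y) hy hxy <;>
      simp only [Finset.inl_mem_disjSum, Finset.inr_mem_disjSum] at hx hy
    exacts [h₁.1 x hx y hy (sum_adj_inl.mp hxy), not_adj_sum_inl_inr x y hxy,
      not_adj_sum_inl_inr y x hxy.symm, h₂.1 x hx y hy (sum_adj_inr.mp hxy)]
  · rintro (v | v) hv
    · let φ : G ↪g G ⊕g H := Embedding.sumInl
      have hclosed : (G ⊕g H).neighborSet (φ v) ⊆ Set.range φ := by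
        rintro (w | w) hw
        exacts [⟨w, rfl⟩, (not_adj_sum_inl_inr (G := G) (H := H) v w hw).elim]
      refine (h₁.2 v (by simpa using hv)).trans_eq
        (ncard_neighborSet_inter_of_embedding φ hclosed ?_).symm
      ext
      simp [φ]
    · let φ : H ↪g G ⊕g H := Embedding.sumInr
      have hclosed : (G ⊕g H).neighborSet (φ v) ⊆ Set.range φ := by
        rintro (w | w) hw
        exacts [(not_adj_sum_inl_inr (G := G) (H := H) w v hw.symm).elim, ⟨w, rfl⟩]
      refine (h₂.2 v (by simpa using hv)).trans_eq
        (ncard_neighborSet_inter_of_embedding φ hclosed ?_).symm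
      ext
      simp [φ]

theorem numKDIS_mul_le_numKDIS_sum :
    numKDIS G k * numKDIS H k ≤ numKDIS (G ⊕g H) k := by
  rw [numKDIS, numKDIS, ← Nat.card_prod]
  refine Nat.card_le_card_of_injective (fun D => ⟨_, D.1.2.disjSum D.2.2⟩) fun D D' h => ?_
  obtain ⟨h₁, h₂⟩ := Finset.disjSum_inj.mp (congrArg Subtype.val h)
  exact Prod.ext (Subtype.ext h₁) (Subtype.ext h₂)

theorem IsKDIS.bot_boxProd {ι : Type*} [Fintype ι] [DecidableEq W] {D : ι → Finset W}
    (hD : ∀ i, IsKDIS H k (D i)) :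
    IsKDIS ((⊥ : SimpleGraph ι) □ H) k (Finset.univ.filter fun p => p.2 ∈ D p.1) := by
  refine ⟨?_, ?_⟩
  · rintro ⟨i, x⟩ hx ⟨j, y⟩ hy hxy
    simp only [boxProd_adj, bot_adj, false_and, false_or] at hxy
    obtain ⟨hxy, rfl⟩ := hxy
    exact (hD i).1 x (by simpa using hx) y (by simpa using hy) hxy
  · rintro ⟨i, v⟩ hv
    let φ := boxProdRight (⊥ : SimpleGraph ι) H i
    have hclosed : ((⊥ : SimpleGraph ι) □ H).neighborSet (φ v) ⊆ Set.range φ := by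
      rintro ⟨j, w⟩ hw
      simp only [φ, mem_neighborSet, boxProdRight_apply, boxProd_adj, bot_adj, false_and,
        false_or] at hw
      exact ⟨w, by simp [φ, hw.2]⟩
    refine ((hD i).2 v (by simpa using hv)).trans_eq
      (ncard_neighborSet_inter_of_embedding φ hclosed ?_).symm
    ext
    simp [φ]

theorem numKDIS_pow_le_numKDIS_bot_boxProd {ι : Type*} [Fintype ι] :
    numKDIS H k ^ Fintype.card ι ≤ numKDIS ((⊥ : SimpleGraph ι) □ H) k := by
  classical
  rw [numKDIS, ← Nat.card_eq_fintype_card, ← Nat.card_fun]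
  refine Nat.card_le_card_of_injective (fun D => ⟨_, IsKDIS.bot_boxProd fun i => (D i).2⟩)
    fun D D' h => funext fun i => Subtype.ext <| Finset.ext fun x => ?_
  simpa using Finset.ext_iff.mp (congrArg Subtype.val h) (i, x)

theorem pow_div_le_mi {m t : ℕ} (n : ℕ) (H : SimpleGraph (Fin m)) (hH : t ≤ numKDIS H k) :
    t ^ (n / m) ≤ mi k n := by
  let G := ((⊥ : SimpleGraph (Fin (n / m))) □ H) ⊕g (⊥ : SimpleGraph (Fin (n % m)))
  have hG : Fintype.card ((Fin (n / m) × Fin m) ⊕ Fin (n % m)) = n := by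
    simp [Nat.div_add_mod']
  calc t ^ (n / m) ≤ numKDIS H k ^ (n / m) := Nat.pow_le_pow_left hH _
    _ ≤ numKDIS ((⊥ : SimpleGraph (Fin (n / m))) □ H) k := by
      simpa using numKDIS_pow_le_numKDIS_bot_boxProd (ι := Fin (n / m)) (H := H) (k := k)
    _ ≤ numKDIS ((⊥ : SimpleGraph (Fin (n / m))) □ H) k *
        numKDIS (⊥ : SimpleGraph (Fin (n % m))) k := Nat.le_mul_of_pos_right _ numKDIS_bot_pos
    _ ≤ numKDIS G k := numKDIS_mul_le_numKDIS_sum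
    _ ≤ mi k n := numKDIS_le_mi G hG

end SimpleGraph

theorem mi_ge_pow_floor_general (k t n : ℕ) :
    t ^ (n / mDIS k t) ≤ mi k n :=
  let ⟨H, hH⟩ := SimpleGraph.exists_le_numKDIS_mDIS k t
  SimpleGraph.pow_div_le_mi n H hH

theorem mi_ge_pow_floor (k t n : ℕ) (hk : 1 ≤ k) (ht : 1 ≤ t) (hn : 1 ≤ n) :
    t ^ (n / mDIS k t) ≤ mi k n :=
  mi_ge_pow_floor_general k t n
end

section
/- For every positive integer k, m(k, 2) = 2k; that is, the smallest number of vertices of a simple graph containing at least 2 distinct k-dominating independent sets is exactly 2k. -/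
open SimpleGraph

/-!
If `D ≠ D'` are `k`-dominating independent sets with `k ≥ 1`, some vertex lies in exactly one of
them, say `v ∈ D \ D'`; its at least `k` neighbours in `D'` avoid the independent set `D`, so
`|D' \ D| ≥ k`. In particular `D' \ D` is nonempty, and the same argument gives `|D \ D'| ≥ k`.
Hence any graph with two `k`-DISes has at least `2k` vertices, and `K_{k,k}` attains this with
its two sides.
-/

open Finset

variable {V W : Type*} [Fintype V] [Fintype W] {G : SimpleGraph V} {k : ℕ}

lemma IsKDIS.le_card_sdiff [DecidableEq V] {D D' : Finset V} (hD : IsKDIS G k D)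
    (hD' : IsKDIS G k D') {v : V} (hv : v ∈ D) (hv' : v ∉ D') : k ≤ #(D' \ D) := by
  calc k ≤ (G.neighborSet v ∩ (D' : Set V)).ncard := hD'.2 v hv'
    _ ≤ (↑(D' \ D) : Set V).ncard := Set.ncard_le_ncard ?_ (finite_toSet _)
    _ = #(D' \ D) := Set.ncard_coe_finset _
  rintro u ⟨hvu, hu⟩
  simpa [hu] using fun huD => hD.1 v hv u huD hvu

lemma IsKDIS.two_mul_le_card [DecidableEq V] (hk : 0 < k) {D D' : Finset V}
    (hD : IsKDIS G k D) (hD' : IsKDIS G k D') (hne : D ≠ D') : 2 * k ≤ Fintype.card V := by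
  wlog hDD' : (D \ D').Nonempty generalizing D D'
  · refine this hD' hD hne.symm (sdiff_nonempty.2 fun hsub => hne ?_)
    exact subset_antisymm (by simpa [sdiff_nonempty] using hDD') hsub
  obtain ⟨v, hv⟩ := hDD'
  rw [mem_sdiff] at hv
  have hkD' : k ≤ #(D' \ D) := hD.le_card_sdiff hD' hv.1 hv.2
  obtain ⟨u, hu⟩ := card_pos.1 (hk.trans_le hkD')
  rw [mem_sdiff] at hu
  have hkD : k ≤ #(D \ D') := hD'.le_card_sdiff hD hu.1 hu.2
  calc 2 * k ≤ #(D \ D') + #(D' \ D) := by omega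
    _ = #(D \ D' ∪ D' \ D) := (card_union_of_disjoint disjoint_sdiff_sdiff).symm
    _ ≤ Fintype.card V := card_le_univ _

lemma numKDIS_le_one_of_card_lt (hk : 0 < k) (hV : Fintype.card V < 2 * k) : numKDIS G k ≤ 1 := by
  classical
  refine Finite.card_le_one_iff_subsingleton.2 ⟨fun ⟨D, hD⟩ ⟨D', hD'⟩ => Subtype.ext ?_⟩
  by_contra hne
  exact (hD.two_mul_le_card hk hD' hne).not_gt hV

lemma isKDIS_map_iff {G' : SimpleGraph W} (e : G ≃g G') {D : Finset V} :
    IsKDIS G' k (D.map e.toEquiv.toEmbedding) ↔ IsKDIS G k D := by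
  have hN : ∀ v, G'.neighborSet (e v) ∩ (D.map e.toEquiv.toEmbedding : Set W) =
      e '' (G.neighborSet v ∩ D) := by
    intro v
    ext w
    obtain ⟨u, rfl⟩ := e.surjective w
    simp [e.map_adj_iff]
  have hmem : ∀ v, e v ∈ D.map e.toEquiv.toEmbedding ↔ v ∈ D := fun v => mem_map' _
  simp only [IsKDIS, forall_mem_map, e.surjective.forall, hmem, hN,
    Set.ncard_image_of_injective _ e.injective, Equiv.coe_toEmbedding, RelIso.coe_fn_toEquiv,
    e.map_adj_iff]

lemma numKDIS_congr {G' : SimpleGraph W} (e : G ≃g G') : numKDIS G k = numKDIS G' k :=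
  Nat.card_congr <| e.toEquiv.finsetCongr.subtypeEquiv fun _ => (isKDIS_map_iff e).symm

lemma isKDIS_map_inl (hk : k ≤ Fintype.card V) :
    IsKDIS (completeBipartiteGraph V W) k (univ.map .inl) := by
  refine ⟨by simp, ?_⟩
  rintro (v | w) hv
  · simp at hv
  · convert hk
    rw [Set.inter_eq_right.2 ?_, Set.ncard_coe_finset, card_map, card_univ]
    simp [Set.subset_def]

lemma isKDIS_map_inr (hk : k ≤ Fintype.card W) :
    IsKDIS (completeBipartiteGraph V W) k (univ.map .inr) := by
  refine ⟨by simp, ?_⟩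
  rintro (v | w) hv
  · convert hk
    rw [Set.inter_eq_right.2 ?_, Set.ncard_coe_finset, card_map, card_univ]
    simp [Set.subset_def]
  · simp at hv

lemma two_le_numKDIS_completeBipartiteGraph [Nonempty V] (hV : k ≤ Fintype.card V)
    (hW : k ≤ Fintype.card W) : 2 ≤ numKDIS (completeBipartiteGraph V W) k := by
  have hne : univ.map (.inl : V ↪ V ⊕ W) ≠ univ.map .inr := by
    obtain ⟨v⟩ := ‹Nonempty V›
    intro h
    have hv := mem_map_of_mem (.inl : V ↪ V ⊕ W) (mem_univ v)
    simp [h] at hv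
  exact Finite.one_lt_card_iff_nontrivial.2
    ⟨⟨⟨_, isKDIS_map_inl hV⟩, ⟨_, isKDIS_map_inr hW⟩, fun h => hne (congrArg Subtype.val h)⟩⟩

lemma exists_fin_le_numKDIS {t : ℕ} (h : t ≤ numKDIS G k) :
    ∃ G' : SimpleGraph (Fin (Fintype.card V)), t ≤ numKDIS G' k :=
  ⟨_, h.trans_eq (numKDIS_congr (SimpleGraph.Iso.map (Fintype.equivFin V) G))⟩

lemma mDIS_le_card {t : ℕ} (h : t ≤ numKDIS G k) : mDIS k t ≤ Fintype.card V :=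
  Nat.sInf_le (exists_fin_le_numKDIS h)

lemma exists_fin_mDIS_le_numKDIS {t : ℕ} (h : t ≤ numKDIS G k) :
    ∃ G' : SimpleGraph (Fin (mDIS k t)), t ≤ numKDIS G' k :=
  Nat.sInf_mem (s := {n | ∃ G' : SimpleGraph (Fin n), t ≤ numKDIS G' k})
    ⟨_, exists_fin_le_numKDIS h⟩

theorem mDIS_two (k : ℕ) (hk : 1 ≤ k) : mDIS k 2 = 2 * k := by
  have : Nonempty (Fin k) := ⟨⟨0, hk⟩⟩
  have hK : 2 ≤ numKDIS (completeBipartiteGraph (Fin k) (Fin k)) k :=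
    two_le_numKDIS_completeBipartiteGraph (Fintype.card_fin k).ge (Fintype.card_fin k).ge
  have hle : mDIS k 2 ≤ 2 * k := by simpa [two_mul] using mDIS_le_card hK
  obtain ⟨G, hG⟩ := exists_fin_mDIS_le_numKDIS hK
  have hge : 2 * k ≤ mDIS k 2 := by
    by_contra! hlt
    have := numKDIS_le_one_of_card_lt (G := G) hk (by simpa using hlt)
    omega
  omega
end

section
/- For every positive integer k, m(k, 3) = 3k; that is, the smallest number of vertices of a simple graph containing at least 3 distinct k-dominating independent sets is exactly 3k. -/
open SimpleGraph

/-!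
Two distinct `k`-dominating independent sets `D ≠ D'` (with `k ≥ 1`) satisfy `k ≤ |D' \ D|`:
neither contains the other, and a vertex of `D \ D'` has at least `k` neighbours in `D'`,
none of which lies in the independent set `D`. For three distinct ones `D₁, D₂, D₃` the sets
`D₁ \ D₂`, `D₂ \ D₃`, `D₃ \ D₁` are pairwise disjoint, so there are at least `3k` vertices.
Conversely, the three parts of the complete tripartite graph with parts of size `k`, the
pullback of `⊤ : SimpleGraph (Fin 3)` along `Fin (3 * k) ≃ Fin 3 × Fin k`, are `k`-dominating
independent sets.
-/

open Finset

namespace IsKDIS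

variable {V : Type*} [Fintype V] {G : SimpleGraph V} {k : ℕ} {D D' : Finset V}

theorem not_ssubset (hk : 1 ≤ k) (hD : IsKDIS G k D) (hD' : IsKDIS G k D') : ¬ D ⊂ D' := by
  intro hDD'
  obtain ⟨w, hwD', hwD⟩ := exists_of_ssubset hDD'
  have hempty : G.neighborSet w ∩ (D : Set V) = ∅ :=
    Set.eq_empty_of_forall_notMem fun u ⟨hwu, huD⟩ => hD'.1 w hwD' u (hDD'.subset huD) hwu
  have := hD.2 w hwD
  rw [hempty, Set.ncard_empty] at this
  omega

variable [DecidableEq V]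

theorem le_card_sdiff_of_not_subset (hD : IsKDIS G k D) (hD' : IsKDIS G k D') (h : ¬ D ⊆ D') :
    k ≤ #(D' \ D) := by
  obtain ⟨v, hvD, hvD'⟩ := not_subset.mp h
  calc k ≤ (G.neighborSet v ∩ (D' : Set V)).ncard := hD'.2 v hvD'
    _ ≤ ((D' \ D : Finset V) : Set V).ncard := by
      refine Set.ncard_le_ncard (fun u ⟨hvu, huD'⟩ => ?_) (Set.toFinite _)
      exact mem_sdiff.mpr ⟨huD', fun huD => hD.1 v hvD u huD hvu⟩
    _ = #(D' \ D) := Set.ncard_coe_finset _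

theorem le_card_sdiff_s8 (hk : 1 ≤ k) (hD : IsKDIS G k D) (hD' : IsKDIS G k D') (hne : D ≠ D') :
    k ≤ #(D' \ D) :=
  hD.le_card_sdiff_of_not_subset hD' fun hsub =>
    hD.not_ssubset hk hD' (hsub.ssubset_of_ne hne)

end IsKDIS

theorem card_sdiff_add_card_sdiff_add_card_sdiff_le {V : Type*} [Fintype V] [DecidableEq V]
    (A B C : Finset V) : #(A \ B) + #(B \ C) + #(C \ A) ≤ Fintype.card V := by
  have hAB_BC : Disjoint (A \ B) (B \ C) :=
    disjoint_left.mpr fun _ h₁ h₂ => (mem_sdiff.mp h₁).2 (mem_sdiff.mp h₂).1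
  have hBC_CA : Disjoint (B \ C) (C \ A) :=
    disjoint_left.mpr fun _ h₁ h₂ => (mem_sdiff.mp h₁).2 (mem_sdiff.mp h₂).1
  have hCA_AB : Disjoint (C \ A) (A \ B) :=
    disjoint_left.mpr fun _ h₁ h₂ => (mem_sdiff.mp h₁).2 (mem_sdiff.mp h₂).1
  calc #(A \ B) + #(B \ C) + #(C \ A) = #(A \ B ∪ B \ C ∪ C \ A) := by
        rw [card_union_of_disjoint (disjoint_union_left.mpr ⟨hCA_AB.symm, hBC_CA⟩),
          card_union_of_disjoint hAB_BC]
    _ ≤ Fintype.card V := card_le_univ _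

theorem three_mul_le_card_of_three_le_numKDIS {V : Type*} [Fintype V] {G : SimpleGraph V}
    {k : ℕ} (hk : 1 ≤ k) (h : 3 ≤ numKDIS G k) : 3 * k ≤ Fintype.card V := by
  classical
  have : Fintype {D : Finset V // IsKDIS G k D} := Fintype.ofFinite _
  rw [numKDIS, Nat.card_eq_fintype_card] at h
  obtain ⟨⟨D₁, h₁⟩, ⟨D₂, h₂⟩, ⟨D₃, h₃⟩, h₁₂, h₁₃, h₂₃⟩ := Fintype.two_lt_card_iff.mp h
  simp only [ne_eq, Subtype.mk.injEq] at h₁₂ h₁₃ h₂₃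
  have := card_sdiff_add_card_sdiff_add_card_sdiff_le D₁ D₂ D₃
  have := h₂.le_card_sdiff_s8 hk h₁ (Ne.symm h₁₂)
  have := h₃.le_card_sdiff_s8 hk h₂ (Ne.symm h₂₃)
  have := h₁.le_card_sdiff_s8 hk h₃ h₁₃
  omega

section CompleteMultipartite

variable {V ι : Type*} [Fintype V] [DecidableEq ι] {k : ℕ}

theorem isKDIS_comap_top_fiber (f : V → ι) (i : ι) (hi : k ≤ #{x | f x = i}) :
    IsKDIS ((⊤ : SimpleGraph ι).comap f) k {x | f x = i} := by
  constructor
  · intro x hx y hy hxy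
    simp only [mem_filter, mem_univ, true_and] at hx hy
    exact (comap_adj.mp hxy) (hx.trans hy.symm)
  · intro v hv
    have hfv : f v ≠ i := by simpa using hv
    refine hi.trans ?_
    rw [← Set.ncard_coe_finset]
    refine Set.ncard_le_ncard (fun u hu => ⟨?_, hu⟩) (Set.toFinite _)
    rw [mem_neighborSet, comap_adj, top_adj, (mem_filter.mp hu).2]
    exact hfv

theorem card_le_numKDIS_comap_top [Fintype ι] (f : V → ι) (hk : 1 ≤ k)
    (hf : ∀ i, k ≤ #{x | f x = i}) : Fintype.card ι ≤ numKDIS ((⊤ : SimpleGraph ι).comap f) k := by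
  rw [← Nat.card_eq_fintype_card, numKDIS]
  refine Nat.card_le_card_of_injective (fun i => ⟨_, isKDIS_comap_top_fiber f i (hf i)⟩) ?_
  intro i j hij
  simp only [Subtype.mk.injEq] at hij
  obtain ⟨x, hxi⟩ := card_pos.mp (hk.trans (hf i))
  have hxj := hij ▸ hxi
  exact (mem_filter.mp hxi).2.symm.trans (mem_filter.mp hxj).2

end CompleteMultipartite

theorem card_filter_fst_equiv_eq {V ι κ : Type*} [Fintype V] [Fintype κ] [DecidableEq ι]
    (e : V ≃ ι × κ) (i : ι) : #{x | (e x).1 = i} = Fintype.card κ := by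
  rw [← card_univ]
  refine card_nbij' (fun x => (e x).2) (fun j => e.symm (i, j)) ?_ ?_ ?_ ?_
  · simp
  · simp
  · intro x hx
    simp only [coe_filter, mem_univ, true_and, Set.mem_ofPred_eq] at hx
    simp [← hx]
  · intro j _
    simp

theorem mDIS_three (k : ℕ) (hk : 1 ≤ k) : mDIS k 3 = 3 * k := by
  let e : Fin (3 * k) ≃ Fin 3 × Fin k := finProdFinEquiv.symm
  have hG : 3 ≤ numKDIS ((⊤ : SimpleGraph (Fin 3)).comap (fun x => (e x).1)) k := by
    simpa using card_le_numKDIS_comap_top _ hk fun i =>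
      ((card_filter_fst_equiv_eq e i).trans (Fintype.card_fin k)).ge
  refine le_antisymm (Nat.sInf_le ⟨_, hG⟩) (le_csInf ⟨_, _, hG⟩ ?_)
  rintro n ⟨G, hG⟩
  simpa using three_mul_le_card_of_three_le_numKDIS hk hG
end

section
/- Let G be a finite simple graph, k ≥ 1, and let A and B be two distinct k-dominating independent sets of G. Then |A \ B| ≥ k and |B \ A| ≥ k. -/
open SimpleGraph

lemma kDIS_aux {V : Type*} [Fintype V] [DecidableEq V] (G : SimpleGraph V) (k : ℕ)
    (A B : Finset V) (hA : IsKDIS G k A) (hB : IsKDIS G k B) {v : V}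
    (hvB : v ∈ B) (hvA : v ∉ A) : k ≤ (A \ B).card := by
  have h := hA.2 v hvA
  refine h.trans ?_
  rw [← Set.ncard_coe_finset (A \ B)]
  apply Set.ncard_le_ncard _ (Set.toFinite _)
  rintro x ⟨hadj, hxA⟩
  simp only [Finset.coe_sdiff, Set.mem_diff, Finset.mem_coe]
  exact ⟨hxA, fun hxB => hB.1 v hvB x hxB hadj⟩

theorem kDIS_sdiff_card {V : Type*} [Fintype V] [DecidableEq V] (G : SimpleGraph V) (k : ℕ)
    (hk : 1 ≤ k) (A B : Finset V) (hA : IsKDIS G k A) (hB : IsKDIS G k B) (hAB : A ≠ B) :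
    k ≤ (A \ B).card ∧ k ≤ (B \ A).card := by
  rcases Finset.not_subset.mp (fun h => hAB (Finset.Subset.antisymm_iff.mpr ⟨h, fun x hx => by
      by_contra hxA
      have := kDIS_aux G k A B hA hB hx hxA
      have : (A \ B).card = 0 := by simp [Finset.sdiff_eq_empty_iff_subset.mpr h]
      omega⟩)) with ⟨v, hvA, hvB⟩
  constructor
  · -- need a vertex in B \ A
    have h1 : k ≤ (B \ A).card := kDIS_aux G k B A hB hA hvA hvB
    obtain ⟨w, hw⟩ := Finset.card_pos.mp (lt_of_lt_of_le hk h1)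
    rw [Finset.mem_sdiff] at hw
    exact kDIS_aux G k A B hA hB hw.1 hw.2
  · exact kDIS_aux G k B A hB hA hvA hvB
end

section
/- Let G be a finite simple graph, k ≥ 1, and let x and y be non-adjacent vertices of G that are almost twins, i.e. |N(x) \ N(y)| < k and |N(y) \ N(x)| < k. Then x and y belong to exactly the same k-dominating independent sets of G: for every k-DIS I of G, x ∈ I if and only if y ∈ I. -/
open SimpleGraph

theorem almost_twins_same_kDIS {V : Type*} [Fintype V] (G : SimpleGraph V) (k : ℕ) (hk : 1 ≤ k)
    (x y : V) (hxy : ¬ G.Adj x y)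
    (h1 : (G.neighborSet x \ G.neighborSet y).ncard < k)
    (h2 : (G.neighborSet y \ G.neighborSet x).ncard < k)
    (I : Finset V) (hI : IsKDIS G k I) : x ∈ I ↔ y ∈ I := by
  obtain ⟨hind, hdom⟩ := hI
  have key : ∀ a b : V, ¬ G.Adj a b →
      (G.neighborSet b \ G.neighborSet a).ncard < k → a ∈ I → b ∈ I := by
    intro a b hab hlt ha
    by_contra hb
    have hk' := hdom b hb
    have hsub : G.neighborSet b ∩ (I : Set V) ⊆ G.neighborSet b \ G.neighborSet a := by
      rintro v ⟨hv1, hv2⟩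
      exact ⟨hv1, fun hv3 => hind a ha v hv2 hv3⟩
    have := Set.ncard_le_ncard hsub (Set.toFinite _)
    omega
  exact ⟨key x y hxy h2, key y x (fun h => hxy h.symm) h1⟩
end
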